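/- arXiv:1409.7942 — 3 statements merged into one kernel-verified Lean document; each statement's English description precedes it below -/
import Mathlib

section
/- With R₀ defined as the product [φ/(α₁+μ_E+c_E)]·[α₁/(α₂+μ_A+c_A)]·[α₂/(α₃+μ_{F₁}+c_{F₁})]·[α₃/(μ_{F₂}+c_{F₂})], the coordinates of the nontrivial equilibrium point P_b are all strictly positive if and only if R₀ > 1, given that φ, α₁, α₂, α₃, K and all four denominators are strictly positive. -/
/-!
The equilibrium is a cascade: `E = K (1 - 1/R₀)`, and each of `A`, `F₁`, `F₂` is a positive
multiple of the previous coordinate. So all four are positive iff `E` is, and since `K > 0` and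
`R₀ > 0` (a product of quotients of positive numbers), `E > 0` iff `1 - 1/R₀ > 0` iff `R₀ > 1`.
-/

section

variable {𝕜 : Type*} [Field 𝕜] [LinearOrder 𝕜] [IsStrictOrderedRing 𝕜] {a b x : 𝕜}

lemma mul_div_pos_iff_of_pos (ha : 0 < a) (hb : 0 < b) : 0 < a * x / b ↔ 0 < x :=
  (div_pos_iff_of_pos_right hb).trans (mul_pos_iff_of_pos_left ha)

lemma mul_one_sub_one_div_pos_iff (ha : 0 < a) (hb : 0 < b) :
    0 < a * (1 - 1 / b) ↔ 1 < b :=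
  (mul_pos_iff_of_pos_left ha).trans (sub_pos.trans (div_lt_one hb))

end

theorem nontrivial_equilibrium_pos_iff_general
    (φ α₁ α₂ α₃ μE μA μF1 μF2 K cE cA cF1 cF2 : ℝ)
    (hK : 0 < K)
    (hφ : 0 < φ) (hα₁ : 0 < α₁) (hα₂ : 0 < α₂) (hα₃ : 0 < α₃)
    (hb₁ : 0 < α₁ + μE + cE) (hb₂ : 0 < α₂ + μA + cA)
    (hb₃ : 0 < α₃ + μF1 + cF1) (hb₄ : 0 < μF2 + cF2) :
    let R₀ := (φ / (α₁ + μE + cE)) * (α₁ / (α₂ + μA + cA)) *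
      (α₂ / (α₃ + μF1 + cF1)) * (α₃ / (μF2 + cF2))
    let E := K * (1 - 1 / R₀)
    let A := α₁ * E / (α₂ + μA + cA)
    let F₁ := α₂ * A / (α₃ + μF1 + cF1)
    let F₂ := α₃ * F₁ / (μF2 + cF2)
    (0 < E ∧ 0 < A ∧ 0 < F₁ ∧ 0 < F₂) ↔ 1 < R₀ := by
  intro R₀ E A F₁ F₂
  have hR₀ : 0 < R₀ := by positivity
  have hA : 0 < A ↔ 0 < E := mul_div_pos_iff_of_pos hα₁ hb₂
  have hF₁ : 0 < F₁ ↔ 0 < A := mul_div_pos_iff_of_pos hα₂ hb₃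
  have hF₂ : 0 < F₂ ↔ 0 < F₁ := mul_div_pos_iff_of_pos hα₃ hb₄
  rw [hF₂, hF₁, hA, and_self, and_self, and_self]
  exact mul_one_sub_one_div_pos_iff hK hR₀

/-- The coordinates of P_b are all strictly positive iff R₀ > 1. -/
theorem nontrivial_equilibrium_pos_iff
    (φ α₁ α₂ α₃ μE μA μF1 μF2 K cE cA cF1 cF2 : ℝ)
    (hμE : 0 ≤ μE) (hμA : 0 ≤ μA) (hμF1 : 0 ≤ μF1) (hμF2 : 0 ≤ μF2)
    (hcE : 0 ≤ cE) (hcA : 0 ≤ cA) (hcF1 : 0 ≤ cF1) (hcF2 : 0 ≤ cF2)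
    (hK : 0 < K)
    (hφ : 0 < φ) (hα₁ : 0 < α₁) (hα₂ : 0 < α₂) (hα₃ : 0 < α₃)
    (hb₁ : 0 < α₁ + μE + cE) (hb₂ : 0 < α₂ + μA + cA)
    (hb₃ : 0 < α₃ + μF1 + cF1) (hb₄ : 0 < μF2 + cF2) :
    let R₀ := (φ / (α₁ + μE + cE)) * (α₁ / (α₂ + μA + cA)) *
      (α₂ / (α₃ + μF1 + cF1)) * (α₃ / (μF2 + cF2))
    let E := K * (1 - 1 / R₀)
    let A := α₁ * E / (α₂ + μA + cA)
    let F₁ := α₂ * A / (α₃ + μF1 + cF1)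
    let F₂ := α₃ * F₁ / (μF2 + cF2)
    (0 < E ∧ 0 < A ∧ 0 < F₁ ∧ 0 < F₂) ↔ 1 < R₀ :=
  nontrivial_equilibrium_pos_iff_general φ α₁ α₂ α₃ μE μA μF1 μF2 K cE cA cF1 cF2 hK hφ hα₁ hα₂ hα₃
    hb₁ hb₂ hb₃ hb₄
end

section
/- Under the hypotheses b₁, b₂, b₃, b₄ > 0 and R₀ = φα₁α₂α₃/(b₁b₂b₃b₄) > 1, the trivial equilibrium (0,0,0,0) of the system E' = φ(1 - E/K)F₂ - b₁E, A' = α₁E - b₂A, F₁' = α₂A - b₃F₁, F₂' = α₃F₁ - b₄F₂ is linearly unstable: the Jacobian at (0,0,0,0) has an eigenvalue with strictly positive real part. -/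
/-!
The characteristic polynomial of the Jacobian is `∏ᵢ (z + bᵢ) - φ α₁ α₂ α₃`. On `[0, ∞)` it is
`b₁ b₂ b₃ b₄ - φ α₁ α₂ α₃ < 0` at `0` exactly when `R₀ > 1`, and it tends to `+∞`, so it has a
positive real root.
-/

open Filter Matrix Polynomial

lemma tendsto_prod_add_atTop {ι : Type*} {s : Finset ι} (hs : s.Nonempty) (b : ι → ℝ) :
    Tendsto (fun x => ∏ i ∈ s, (x + b i)) atTop atTop := by
  induction hs using Finset.Nonempty.cons_induction with
  | singleton a => simpa using tendsto_atTop_add_const_right _ (b a) tendsto_id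
  | cons a s _ _ ih =>
    simpa [Finset.prod_cons] using
      (tendsto_atTop_add_const_right _ (b a) tendsto_id).atTop_mul_atTop₀ ih

lemma exists_pos_prod_add_eq {ι : Type*} {s : Finset ι} (hs : s.Nonempty) (b : ι → ℝ) {c : ℝ}
    (hc : ∏ i ∈ s, b i < c) : ∃ x > 0, ∏ i ∈ s, (x + b i) = c :=
  intermediate_value_Ioi (a := 0) (by fun_prop) (tendsto_prod_add_atTop hs b) (by simpa using hc)

lemma eval_charpoly_cyclic {R : Type*} [CommRing R] (b₁ b₂ b₃ b₄ c₁ c₂ c₃ c₄ z : R) :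
    (!![-b₁, 0, 0, c₄; c₁, -b₂, 0, 0; 0, c₂, -b₃, 0; 0, 0, c₃, -b₄]).charpoly.eval z =
      (z + b₁) * (z + b₂) * (z + b₃) * (z + b₄) - c₄ * c₁ * c₂ * c₃ := by
  rw [eval_charpoly]
  simp [det_succ_row_zero, Fin.sum_univ_succ, show Fin.succAbove (3 : Fin 4) 2 = 2 from rfl]
  ring

theorem trivial_equilibrium_unstable_general
    (φ α₁ α₂ α₃ b₁ b₂ b₃ b₄ : ℝ)
    (h₁ : 0 < b₁) (h₂ : 0 < b₂) (h₃ : 0 < b₃) (h₄ : 0 < b₄)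
    (hR : 1 < φ * α₁ * α₂ * α₃ / (b₁ * b₂ * b₃ * b₄)) :
    let B : Matrix (Fin 4) (Fin 4) ℂ :=
      (Matrix.of ![![-b₁, 0, 0, φ], ![α₁, -b₂, 0, 0],
        ![0, α₂, -b₃, 0], ![0, 0, α₃, -b₄]]).map (Complex.ofReal)
    ∃ z : ℂ, z ∈ spectrum ℂ B ∧ 0 < z.re := by
  intro B
  have hprod : ∏ i, ![b₁, b₂, b₃, b₄] i < φ * α₁ * α₂ * α₃ := by
    simpa [Fin.prod_univ_four] using (one_lt_div (by positivity)).1 hR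
  obtain ⟨x, hx, hroot⟩ := exists_pos_prod_add_eq Finset.univ_nonempty _ hprod
  refine ⟨x, mem_spectrum_of_isRoot_charpoly ?_, by simpa using hx⟩
  rw [show B = (!![-b₁, 0, 0, φ; α₁, -b₂, 0, 0; 0, α₂, -b₃, 0; 0, 0, α₃, -b₄]).map
    Complex.ofRealHom from rfl, charpoly_map]
  refine IsRoot.map (f := Complex.ofRealHom) ?_
  rw [IsRoot.def, eval_charpoly_cyclic, sub_eq_zero, ← hroot]
  simp [Fin.prod_univ_four]

/-- If R₀ > 1, the trivial equilibrium is linearly unstable: the Jacobian at the origin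
has an eigenvalue with strictly positive real part. -/
theorem trivial_equilibrium_unstable
    (φ α₁ α₂ α₃ b₁ b₂ b₃ b₄ K : ℝ)
    (hφ : 0 < φ) (hα₁ : 0 < α₁) (hα₂ : 0 < α₂) (hα₃ : 0 < α₃)
    (h₁ : 0 < b₁) (h₂ : 0 < b₂) (h₃ : 0 < b₃) (h₄ : 0 < b₄) (hK : 0 < K)
    (hR : 1 < φ * α₁ * α₂ * α₃ / (b₁ * b₂ * b₃ * b₄)) :
    let B : Matrix (Fin 4) (Fin 4) ℂ :=
      (Matrix.of ![![-b₁, 0, 0, φ], ![α₁, -b₂, 0, 0],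
        ![0, α₂, -b₃, 0], ![0, 0, α₃, -b₄]]).map (Complex.ofReal)
    ∃ z : ℂ, z ∈ spectrum ℂ B ∧ 0 < z.re :=
  trivial_equilibrium_unstable_general φ α₁ α₂ α₃ b₁ b₂ b₃ b₄ h₁ h₂ h₃ h₄ hR
end

section
/- If all rate parameters are strictly positive and K > 0, then the system E' = φ(1 - E/K)F₂ - b₁E, A' = α₁E - b₂A, F₁' = α₂A - b₃F₁, F₂' = α₃F₁ - b₄F₂ has exactly two equilibrium points when R₀ ≠ 1: the origin and P_b. -/
/-!
At an equilibrium the last three equations are linear and force the cascade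
`A = α₁E/b₂`, `F₁ = α₂A/b₃`, `F₂ = α₃F₁/b₄`, so `F₂` is a fixed multiple of `E`. Substituting it
into the first equation turns it into `b₁ E (R₀ (1 - E/K) - 1) = 0`, whose roots are `E = 0` and
`E = K (1 - 1/R₀)`.
-/

lemma sub_mul_eq_zero_iff_eq_div {a b x y : ℝ} (hb : b ≠ 0) :
    a * x - b * y = 0 ↔ y = a * x / b := by
  rw [sub_eq_zero, eq_div_iff hb, mul_comm y, eq_comm]

lemma mul_one_sub_div_eq_one_iff {R K E : ℝ} (hR : R ≠ 0) (hK : K ≠ 0) :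
    R * (1 - E / K) = 1 ↔ E = K * (1 - 1 / R) := by
  field_simp
  constructor <;> intro h <;> linarith

lemma cascade_substituted_eq {φ α₁ α₂ α₃ b₁ b₂ b₃ b₄ K : ℝ} (E : ℝ)
    (h₁ : b₁ ≠ 0) (h₂ : b₂ ≠ 0) (h₃ : b₃ ≠ 0) (h₄ : b₄ ≠ 0) :
    φ * (1 - E / K) * (α₃ * (α₂ * (α₁ * E / b₂) / b₃) / b₄) - b₁ * E =
      b₁ * E * (φ * α₁ * α₂ * α₃ / (b₁ * b₂ * b₃ * b₄) * (1 - E / K) - 1) := by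
  field_simp

theorem exactly_two_equilibria_general (φ α₁ α₂ α₃ b₁ b₂ b₃ b₄ K : ℝ)
    (hφ : 0 < φ) (hα₁ : 0 < α₁) (hα₂ : 0 < α₂) (hα₃ : 0 < α₃)
    (h₁ : 0 < b₁) (h₂ : 0 < b₂) (h₃ : 0 < b₃) (h₄ : 0 < b₄) (hK : 0 < K) :
    let R₀ := φ * α₁ * α₂ * α₃ / (b₁ * b₂ * b₃ * b₄)
    let Estar := K * (1 - 1 / R₀)
    let Astar := α₁ * Estar / b₂
    let F₁star := α₂ * Astar / b₃
    let F₂star := α₃ * F₁star / b₄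
    ∀ E A F₁ F₂ : ℝ,
      (φ * (1 - E / K) * F₂ - b₁ * E = 0 ∧
       α₁ * E - b₂ * A = 0 ∧
       α₂ * A - b₃ * F₁ = 0 ∧
       α₃ * F₁ - b₄ * F₂ = 0) ↔
      ((E, A, F₁, F₂) = (0, 0, 0, 0) ∨ (E, A, F₁, F₂) = (Estar, Astar, F₁star, F₂star)) := by
  intro R₀ Estar Astar F₁star F₂star E A F₁ F₂
  have hR₀ : R₀ ≠ 0 := by positivity
  have first_eq_iff : ∀ E : ℝ,
      φ * (1 - E / K) * (α₃ * (α₂ * (α₁ * E / b₂) / b₃) / b₄) - b₁ * E = 0 ↔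
        E = 0 ∨ E = Estar := by
    intro E
    rw [cascade_substituted_eq E h₁.ne' h₂.ne' h₃.ne' h₄.ne', mul_eq_zero, mul_eq_zero,
      sub_eq_zero, mul_one_sub_div_eq_one_iff hR₀ hK.ne']
    simp only [h₁.ne', false_or, Estar]
  simp only [sub_mul_eq_zero_iff_eq_div h₂.ne', sub_mul_eq_zero_iff_eq_div h₃.ne',
    sub_mul_eq_zero_iff_eq_div h₄.ne', Prod.mk.injEq]
  constructor
  · rintro ⟨hE, rfl, rfl, rfl⟩
    rcases (first_eq_iff E).mp hE with rfl | rfl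
    · left; simp
    · right; exact ⟨rfl, rfl, rfl, rfl⟩
  · rintro (⟨rfl, rfl, rfl, rfl⟩ | ⟨rfl, rfl, rfl, rfl⟩)
    · simp
    · exact ⟨(first_eq_iff Estar).mpr (Or.inr rfl), rfl, rfl, rfl⟩

/-- When R₀ ≠ 1, the system has exactly two equilibrium points: the origin and P_b. -/
theorem exactly_two_equilibria (φ α₁ α₂ α₃ b₁ b₂ b₃ b₄ K : ℝ)
    (hφ : 0 < φ) (hα₁ : 0 < α₁) (hα₂ : 0 < α₂) (hα₃ : 0 < α₃)
    (h₁ : 0 < b₁) (h₂ : 0 < b₂) (h₃ : 0 < b₃) (h₄ : 0 < b₄) (hK : 0 < K)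
    (hR : φ * α₁ * α₂ * α₃ / (b₁ * b₂ * b₃ * b₄) ≠ 1) :
    let R₀ := φ * α₁ * α₂ * α₃ / (b₁ * b₂ * b₃ * b₄)
    let Estar := K * (1 - 1 / R₀)
    let Astar := α₁ * Estar / b₂
    let F₁star := α₂ * Astar / b₃
    let F₂star := α₃ * F₁star / b₄
    ∀ E A F₁ F₂ : ℝ,
      (φ * (1 - E / K) * F₂ - b₁ * E = 0 ∧
       α₁ * E - b₂ * A = 0 ∧
       α₂ * A - b₃ * F₁ = 0 ∧
       α₃ * F₁ - b₄ * F₂ = 0) ↔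
      ((E, A, F₁, F₂) = (0, 0, 0, 0) ∨ (E, A, F₁, F₂) = (Estar, Astar, F₁star, F₂star)) :=
  exactly_two_equilibria_general φ α₁ α₂ α₃ b₁ b₂ b₃ b₄ K hφ hα₁ hα₂ hα₃ h₁ h₂ h₃ h₄ hK
end
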